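/- Let 𝒟 be a definable subcategory of Mod-R, M ∈ 𝒟 strictly 𝒟-atomic and finitely generated over its endomorphism ring S = End(M_R). Then the ring of definable scalars of M equals the biendomorphism ring Biend(M_R) = End_S(M). -/

import Mathlib

open TensorProduct DirectSum

universe u v

/-- A pp formula in `n` free variables. -/
structure PPFormula (R : Type u) [Ring R] (n : ℕ) where
  k : ℕ
  m : ℕ
  A : Fin n → Fin m → R
  B : Fin k → Fin m → R

/-- The solution set of a pp formula in a module. -/
def PPFormula.sol {R : Type u} [Ring R] {n : ℕ} (φ : PPFormula R n)
    (M : Type v) [AddCommGroup M] [Module R M] : Set (Fin n → M) :=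
  { a | ∃ b : Fin φ.k → M, ∀ j,
      (∑ i, φ.A i j • a i) + (∑ l, φ.B l j • b l) = 0 }

/-- A submodule `N ≤ M` is pure if `N ⊗ L → M ⊗ L` is injective for every module `L`. -/
def IsPureSubmodule (R : Type u) [CommRing R]
    (M : Type v) [AddCommGroup M] [Module R M] (N : Submodule R M) : Prop :=
  ∀ (L : Type v) [AddCommGroup L] [Module R L],
    Function.Injective (LinearMap.rTensor L N.subtype)

/-- A surjection is a pure epimorphism if its kernel is a pure submodule of the domain. -/
def IsPureEpi (R : Type u) [CommRing R]
    {N : Type v} [AddCommGroup N] [Module R N] {M : Type v} [AddCommGroup M] [Module R M]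
    (f : N →ₗ[R] M) : Prop :=
  Function.Surjective f ∧ IsPureSubmodule R N (LinearMap.ker f)

/-- A class of modules (closed under isomorphism) is definable if it is closed under
direct products, direct limits and pure submodules. -/
def IsDefinableClass (R : Type u) [CommRing R]
    (D : (M : Type v) → [AddCommGroup M] → [Module R M] → Prop) : Prop :=
  (∀ (M N : Type v) [AddCommGroup M] [Module R M] [AddCommGroup N] [Module R N],
      (M ≃ₗ[R] N) → D M → D N) ∧
  (∀ (ι : Type v) (L : ι → Type v) [∀ i, AddCommGroup (L i)] [∀ i, Module R (L i)],
      (∀ i, D (L i)) → D (∀ i, L i)) ∧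
  (∀ (ι : Type v) [Preorder ι] [IsDirected ι (· ≤ ·)] [Nonempty ι] [DecidableEq ι]
      (G : ι → Type v) [∀ i, AddCommGroup (G i)] [∀ i, Module R (G i)]
      (f : ∀ i j, i ≤ j → G i →ₗ[R] G j) [DirectedSystem G (fun i j h => f i j h)],
      (∀ i, D (G i)) → D (Module.DirectLimit G f)) ∧
  (∀ (M : Type v) [AddCommGroup M] [Module R M] (N : Submodule R M),
      IsPureSubmodule R M N → D M → D N)

/-- `φ` generates the pp-type of the tuple `a` of `M` modulo the theory of `𝒟`. -/
def DGenerates (R : Type u) [CommRing R]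
    (D : (M : Type v) → [AddCommGroup M] → [Module R M] → Prop)
    {n : ℕ} (φ : PPFormula R n)
    (M : Type v) [AddCommGroup M] [Module R M] (a : Fin n → M) : Prop :=
  a ∈ φ.sol M ∧ ∀ ψ : PPFormula R n, a ∈ ψ.sol M →
    ∀ (N : Type v) [AddCommGroup N] [Module R N], D N → φ.sol N ⊆ ψ.sol N

/-- `M ∈ 𝒟` is `𝒟`-atomic: every pp-type realised in `M` is `𝒟`-finitely generated. -/
def IsDAtomic (R : Type u) [CommRing R]
    (D : (M : Type v) → [AddCommGroup M] → [Module R M] → Prop)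
    (M : Type v) [AddCommGroup M] [Module R M] : Prop :=
  D M ∧ ∀ (n : ℕ) (a : Fin n → M), ∃ φ : PPFormula R n, DGenerates R D φ M a

/-- `M ∈ 𝒟` is strictly `𝒟`-atomic: it is `𝒟`-atomic and whenever `φ` `𝒟`-generates
the pp-type of `ā` in `M`, every `b̄ ∈ φ(N)` with `N ∈ 𝒟` is the image of `ā` under a
morphism `M → N`. -/
def IsStrictlyDAtomic (R : Type u) [CommRing R]
    (D : (M : Type v) → [AddCommGroup M] → [Module R M] → Prop)
    (M : Type v) [AddCommGroup M] [Module R M] : Prop :=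
  IsDAtomic R D M ∧
    ∀ (n : ℕ) (a : Fin n → M) (φ : PPFormula R n), DGenerates R D φ M a →
      ∀ (N : Type v) [AddCommGroup N] [Module R N], D N →
        ∀ b ∈ φ.sol N, ∃ f : M →ₗ[R] N, ∀ i, f (a i) = b i

/-- `N` belongs to the definable subcategory generated by `M`: every pp-pair closed on
`M` is closed on `N`. -/
def InDefGen (R : Type u) [CommRing R] (M : Type v) [AddCommGroup M] [Module R M]
    (N : Type v) [AddCommGroup N] [Module R N] : Prop :=
  ∀ (n : ℕ) (φ ψ : PPFormula R n), φ.sol M = ψ.sol M → φ.sol N = ψ.sol N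

/-- A pp formula `ρ(x, y)` is a definable scalar for `M` if on every member of the
definable subcategory generated by `M` its solution set is the graph of a function. -/
def IsDefinableScalarFormula (R : Type u) [CommRing R]
    (M : Type v) [AddCommGroup M] [Module R M] (ρ : PPFormula R 2) : Prop :=
  ∀ (N : Type v) [AddCommGroup N] [Module R N], InDefGen R M N →
    ∀ x : N, ∃! y : N, ![x, y] ∈ ρ.sol N

/-!
Let `a` generate `M` over `S = End(M)` and let `β` commute with `S`. Take a pp formula `θ`
generating the pp-type of `(a, β a)`. By strict atomicity the solutions of `θ` in `M` are the
tuples `(s a, s β a) = (s a, β s a)` with `s ∈ S`, so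
`ρ(x, y) := ∃ t₁ … tₙ ⊨ θ, x = ∑ tᵢ(i) ∧ y = ∑ tᵢ(n + i)` defines the graph of `β` in `M`.
Totality (`∃ y, ρ(x, y)` is `x = x`) and functionality (`ρ(0, y)` is `y = 0`) are equalities of
pp-definable sets on `M`, hence persist to the definable subcategory generated by `M`.
Conversely, endomorphisms preserve the graph of a definable scalar, which is a function on `M`.
-/

namespace PPFormula

variable {R : Type u} [Ring R] {n p : ℕ}
variable {M N : Type v} [AddCommGroup M] [Module R M] [AddCommGroup N] [Module R N]

theorem zero_mem_sol (φ : PPFormula R n) : (0 : Fin n → N) ∈ φ.sol N :=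
  ⟨0, fun j => by simp⟩

theorem sub_mem_sol (φ : PPFormula R n) {a a' : Fin n → N} (ha : a ∈ φ.sol N)
    (ha' : a' ∈ φ.sol N) : a - a' ∈ φ.sol N := by
  obtain ⟨b, hb⟩ := ha
  obtain ⟨b', hb'⟩ := ha'
  refine ⟨b - b', fun j => ?_⟩
  have := congrArg₂ (· - ·) (hb j) (hb' j)
  simp only [Pi.sub_apply, smul_sub, Finset.sum_sub_distrib, sub_zero] at this ⊢
  rw [← this]
  abel

theorem comp_mem_sol (φ : PPFormula R n) (f : M →ₗ[R] N) {a : Fin n → M} (ha : a ∈ φ.sol M) :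
    ⇑f ∘ a ∈ φ.sol N := by
  obtain ⟨b, hb⟩ := ha
  exact ⟨⇑f ∘ b, fun j => by simpa using congrArg f (hb j)⟩

noncomputable def ofSystem {K J : Type*} [Fintype K] [Fintype J] (A : Fin n → J → R)
    (B : K → J → R) : PPFormula R n where
  k := Fintype.card K
  m := Fintype.card J
  A i j := A i ((Fintype.equivFin J).symm j)
  B l j := B ((Fintype.equivFin K).symm l) ((Fintype.equivFin J).symm j)

theorem mem_sol_ofSystem {K J : Type*} [Fintype K] [Fintype J] (A : Fin n → J → R)
    (B : K → J → R) (a : Fin n → N) :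
    a ∈ (ofSystem A B).sol N ↔ ∃ b : K → N, ∀ j, ∑ i, A i j • a i + ∑ l, B l j • b l = 0 := by
  constructor
  · rintro ⟨b, hb⟩
    refine ⟨fun l => b (Fintype.equivFin K l), fun j => ?_⟩
    have hsum : ∑ l, B l j • b (Fintype.equivFin K l) =
        ∑ l : Fin (ofSystem A B).k, B ((Fintype.equivFin K).symm l) j • b l :=
      Fintype.sum_equiv (Fintype.equivFin K) _ _ fun l => by rw [Equiv.symm_apply_apply]
    have h : ∑ i, A i _ • a i + ∑ l, B ((Fintype.equivFin K).symm l) _ • b l = 0 :=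
      hb (Fintype.equivFin J j)
    rw [Equiv.symm_apply_apply] at h
    exact (congrArg (_ + ·) hsum).trans h
  · rintro ⟨b, hb⟩
    refine ⟨b ∘ (Fintype.equivFin K).symm, fun j => ?_⟩
    have h := hb ((Fintype.equivFin J).symm j)
    rw [← (Fintype.equivFin K).symm.sum_comp] at h
    exact h

def comap (φ : PPFormula R n) (L : Fin n → Fin p → R) : PPFormula R p where
  k := φ.k
  m := φ.m
  A j e := ∑ i, φ.A i e * L i j
  B := φ.B

theorem mem_sol_comap (φ : PPFormula R n) (L : Fin n → Fin p → R) (a : Fin p → N) :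
    a ∈ (φ.comap L).sol N ↔ (fun i => ∑ j, L i j • a j) ∈ φ.sol N := by
  have h : ∀ e, ∑ j, (∑ i, φ.A i e * L i j) • a j = ∑ i, φ.A i e • ∑ j, L i j • a j := by
    intro e
    simp only [Finset.sum_smul, Finset.smul_sum, mul_smul]
    exact Finset.sum_comm
  simp only [sol, comap, Set.mem_ofPred_eq, h]
  rfl

/- The existential variables are the `q` tuples `t i` with their witnesses for `φ`; the
equations are those of `φ` on each `t i`, and `a j = ∑ i, ∑ s, L j i s • t i s`. -/
noncomputable def mapPow (φ : PPFormula R n) (q : ℕ) (L : Fin p → Fin q → Fin n → R) :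
    PPFormula R p :=
  ofSystem (K := (Fin q × Fin n) ⊕ (Fin q × Fin φ.k)) (J := (Fin q × Fin φ.m) ⊕ Fin p)
    (fun j' => Sum.elim 0 fun j => if j' = j then 1 else 0)
    (Sum.elim
      (fun is => Sum.elim (fun ie => if is.1 = ie.1 then φ.A is.2 ie.2 else 0)
        fun j => -L j is.1 is.2)
      (fun il => Sum.elim (fun ie => if il.1 = ie.1 then φ.B il.2 ie.2 else 0) 0))

theorem mem_sol_mapPow (φ : PPFormula R n) (q : ℕ) (L : Fin p → Fin q → Fin n → R)
    (a : Fin p → N) :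
    a ∈ (φ.mapPow q L).sol N ↔ ∃ t : Fin q → Fin n → N, (∀ i, t i ∈ φ.sol N) ∧
      ∀ j, a j = ∑ i, ∑ s, L j i s • t i s := by
  simp only [mapPow, mem_sol_ofSystem, Sum.forall, Prod.forall, Fintype.sum_sum_type,
    Fintype.sum_prod_type, Sum.elim_inl, Sum.elim_inr, ite_smul, zero_smul, Pi.zero_apply,
    Finset.sum_const_zero, Finset.sum_ite_irrel, Finset.sum_ite_eq', Finset.mem_univ, if_true,
    zero_add, one_smul, add_zero, neg_smul, Finset.sum_neg_distrib, ← sub_eq_add_neg, sub_eq_zero]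
  constructor
  · rintro ⟨b, hφ, ha⟩
    exact ⟨fun i s => b (.inl (i, s)), fun i => ⟨fun l => b (.inr (i, l)), hφ i⟩, ha⟩
  · rintro ⟨t, ht, ha⟩
    choose w hw using ht
    exact ⟨Sum.elim (fun is => t is.1 is.2) (fun il => w il.1 il.2), hw, ha⟩

variable (R) in
def top (n : ℕ) : PPFormula R n := ⟨0, 0, fun _ => Fin.elim0, Fin.elim0⟩

theorem sol_top : (top R n).sol N = Set.univ :=
  Set.eq_univ_of_forall fun _ => ⟨Fin.elim0, fun j => Fin.elim0 j⟩

variable (R) in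
def eqZero (n : ℕ) : PPFormula R n := ⟨0, n, fun i j => if i = j then 1 else 0, Fin.elim0⟩

theorem sol_eqZero : (eqZero R n).sol N = {0} := by
  ext a
  simp [sol, eqZero, funext_iff]

noncomputable def existsSnd (ρ : PPFormula R 2) : PPFormula R 1 :=
  ρ.mapPow 1 fun _ _ => Pi.single 0 1

theorem mem_sol_existsSnd (ρ : PPFormula R 2) (x : Fin 1 → N) :
    x ∈ ρ.existsSnd.sol N ↔ ∃ y, ![x 0, y] ∈ ρ.sol N := by
  simp only [existsSnd, mem_sol_mapPow, Fin.forall_fin_one, Fin.sum_univ_one, Pi.single_apply,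
    ite_smul, one_smul, zero_smul, Finset.sum_ite_eq', Finset.mem_univ, if_true]
  constructor
  · rintro ⟨t, ht, hx⟩
    refine ⟨t 0 1, ?_⟩
    convert ht using 1
    ext i; fin_cases i <;> simp [hx]
  · rintro ⟨y, hy⟩
    exact ⟨fun _ => ![x 0, y], hy, rfl⟩

def zeroFst (ρ : PPFormula R 2) : PPFormula R 1 := ρ.comap ![0, 1]

theorem mem_sol_zeroFst (ρ : PPFormula R 2) (y : Fin 1 → N) :
    y ∈ ρ.zeroFst.sol N ↔ ![0, y 0] ∈ ρ.sol N := by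
  rw [zeroFst, mem_sol_comap]
  convert Iff.rfl using 2
  ext i; fin_cases i <;> simp

end PPFormula

section DefinableScalar

variable {R : Type u} [CommRing R]
variable {M N : Type v} [AddCommGroup M] [Module R M] [AddCommGroup N] [Module R N]

theorem InDefGen.refl : InDefGen R M M := fun _ _ _ h => h

theorem InDefGen.exists_mem_sol {ρ : PPFormula R 2} (hN : InDefGen R M N)
    (htot : ∀ x : M, ∃ y, ![x, y] ∈ ρ.sol M) (x : N) : ∃ y, ![x, y] ∈ ρ.sol N := by
  have hM : ρ.existsSnd.sol M = (PPFormula.top R 1).sol M := by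
    rw [PPFormula.sol_top, Set.eq_univ_iff_forall]
    exact fun x => (ρ.mem_sol_existsSnd x).2 (htot (x 0))
  have hx := (ρ.mem_sol_existsSnd ![x]).1 (by simp [hN 1 _ _ hM, PPFormula.sol_top])
  simpa using hx

theorem InDefGen.eq_zero_of_mem_sol {ρ : PPFormula R 2} (hN : InDefGen R M N)
    (hfun : ∀ y : M, ![0, y] ∈ ρ.sol M → y = 0) {y : N} (hy : ![0, y] ∈ ρ.sol N) : y = 0 := by
  have hM : ρ.zeroFst.sol M = (PPFormula.eqZero R 1).sol M := by
    ext y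
    rw [PPFormula.mem_sol_zeroFst, PPFormula.sol_eqZero, Set.mem_singleton_iff, funext_iff,
      Fin.forall_fin_one]
    refine ⟨hfun _, fun hy => ?_⟩
    convert ρ.zero_mem_sol (N := M) using 1
    ext i; fin_cases i <;> simp [hy]
  have hy' : ![y] ∈ ρ.zeroFst.sol N := (ρ.mem_sol_zeroFst _).2 hy
  rw [hN 1 _ _ hM, PPFormula.sol_eqZero] at hy'
  simpa using hy'

theorem isDefinableScalarFormula_of_total_of_functional {ρ : PPFormula R 2}
    (htot : ∀ x : M, ∃ y, ![x, y] ∈ ρ.sol M) (hfun : ∀ y : M, ![0, y] ∈ ρ.sol M → y = 0) :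
    IsDefinableScalarFormula R M ρ := by
  intro N _ _ hN x
  obtain ⟨y, hy⟩ := hN.exists_mem_sol htot x
  refine ⟨y, hy, fun y' hy' => sub_eq_zero.1 (hN.eq_zero_of_mem_sol hfun ?_)⟩
  simpa [Matrix.cons_sub_cons] using ρ.sub_mem_sol hy' hy

theorem IsDefinableScalarFormula.apply_comm {ρ : PPFormula R 2}
    (hρ : IsDefinableScalarFormula R M ρ) {β : M → M} (hβ : ∀ x, ![x, β x] ∈ ρ.sol M)
    (s : M →ₗ[R] M) (x : M) : β (s x) = s (β x) := by
  refine (hρ M InDefGen.refl (s x)).unique (hβ (s x)) ?_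
  convert ρ.comp_mem_sol s (hβ x) using 1
  ext i; fin_cases i <;> simp

end DefinableScalar

section Biendomorphism

variable {R : Type u} [CommRing R] {n : ℕ}
variable {M N : Type v} [AddCommGroup M] [Module R M] [AddCommGroup N] [Module R N]

noncomputable def PPFormula.blockSum (θ : PPFormula R (n + n)) : PPFormula R 2 :=
  θ.mapPow n fun j i => Pi.single (![Fin.castAdd n i, Fin.natAdd n i] j) 1

theorem PPFormula.mem_sol_blockSum (θ : PPFormula R (n + n)) (x y : N) :
    ![x, y] ∈ θ.blockSum.sol N ↔ ∃ t : Fin n → Fin (n + n) → N, (∀ i, t i ∈ θ.sol N) ∧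
      x = ∑ i, t i (Fin.castAdd n i) ∧ y = ∑ i, t i (Fin.natAdd n i) := by
  simp [blockSum, mem_sol_mapPow, Fin.forall_fin_two, Pi.single_apply]

variable {D : (M : Type v) → [AddCommGroup M] → [Module R M] → Prop}

theorem apply_natAdd_eq_of_mem_sol (hstr : IsStrictlyDAtomic R D M) {a : Fin n → M}
    {β : M →ₗ[R] M} (hβ : ∀ (s : M →ₗ[R] M) x, β (s x) = s (β x)) {θ : PPFormula R (n + n)}
    (hθ : DGenerates R D θ M (Fin.append a (β ∘ a))) {t : Fin (n + n) → M} (ht : t ∈ θ.sol M)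
    (i : Fin n) : t (Fin.natAdd n i) = β (t (Fin.castAdd n i)) := by
  obtain ⟨f, hf⟩ := hstr.2 _ _ θ hθ M hstr.1.1 t ht
  rw [← hf, ← hf, Fin.append_right, Fin.append_left, Function.comp_apply, hβ]

theorem mem_sol_blockSum_iff_eq_apply (hstr : IsStrictlyDAtomic R D M) {a : Fin n → M}
    (ha : ∀ m : M, ∃ e : Fin n → (M →ₗ[R] M), m = ∑ i, e i (a i))
    {β : M →ₗ[R] M} (hβ : ∀ (s : M →ₗ[R] M) x, β (s x) = s (β x)) {θ : PPFormula R (n + n)}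
    (hθ : DGenerates R D θ M (Fin.append a (β ∘ a))) (x y : M) :
    ![x, y] ∈ θ.blockSum.sol M ↔ y = β x := by
  rw [θ.mem_sol_blockSum]
  constructor
  · rintro ⟨t, ht, rfl, rfl⟩
    simp only [apply_natAdd_eq_of_mem_sol hstr hβ hθ (ht _), map_sum]
  · rintro rfl
    obtain ⟨e, rfl⟩ := ha x
    refine ⟨fun i => e i ∘ Fin.append a (β ∘ a), fun i => θ.comp_mem_sol (e i) hθ.1, ?_, ?_⟩
    · simp
    · simp only [map_sum, hβ, Function.comp_apply, Fin.append_right]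

end Biendomorphism

theorem ring_of_definable_scalars_eq_biend_general (R : Type u) [CommRing R]
    (D : (M : Type v) → [AddCommGroup M] → [Module R M] → Prop)
    (M : Type v) [AddCommGroup M] [Module R M]
    (hstr : IsStrictlyDAtomic R D M)
    (hfg : ∃ (n : ℕ) (a : Fin n → M), ∀ m : M,
      ∃ e : Fin n → (M →ₗ[R] M), m = ∑ i, e i (a i))
    (β : M →ₗ[R] M) :
    (∀ s : M →ₗ[R] M, β.comp s = s.comp β) ↔
      ∃ ρ : PPFormula R 2, IsDefinableScalarFormula R M ρ ∧
        ∀ x : M, ![x, β x] ∈ ρ.sol M := by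
  constructor
  · intro hcomm
    have hβ (s : M →ₗ[R] M) : ∀ x, β (s x) = s (β x) := LinearMap.congr_fun (hcomm s)
    obtain ⟨n, a, ha⟩ := hfg
    obtain ⟨θ, hθ⟩ := hstr.1.2 (n + n) (Fin.append a (β ∘ a))
    have hgraph := mem_sol_blockSum_iff_eq_apply hstr ha hβ hθ
    refine ⟨θ.blockSum, isDefinableScalarFormula_of_total_of_functional
      (fun x => ⟨β x, (hgraph x _).2 rfl⟩) (fun y hy => ?_), fun x => (hgraph x _).2 rfl⟩
    simpa using (hgraph 0 y).1 hy
  · rintro ⟨ρ, hρ, hgraph⟩ s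
    exact LinearMap.ext (hρ.apply_comm hgraph s)

theorem ring_of_definable_scalars_eq_biend (R : Type u) [CommRing R]
    (D : (M : Type v) → [AddCommGroup M] → [Module R M] → Prop)
    (hD : IsDefinableClass R D)
    (M : Type v) [AddCommGroup M] [Module R M] (hM : D M)
    (hstr : IsStrictlyDAtomic R D M)
    (hfg : ∃ (n : ℕ) (a : Fin n → M), ∀ m : M,
      ∃ e : Fin n → (M →ₗ[R] M), m = ∑ i, e i (a i))
    (β : M →ₗ[R] M) :
    (∀ s : M →ₗ[R] M, β.comp s = s.comp β) ↔
      ∃ ρ : PPFormula R 2, IsDefinableScalarFormula R M ρ ∧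
        ∀ x : M, ![x, β x] ∈ ρ.sol M :=
  ring_of_definable_scalars_eq_biend_general R D M hstr hfg β
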